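/- Monotonicity of the greedy allocation in a bidder's own average price: fix the requests and average prices of all other bidders and the capacity vector (k_1,…,k_m). In the greedy allocation that processes bidders in descending order of average price and grants a request iff it fits in the remaining capacity for every type, if bidder j wins with average price b̄_j, then j also wins with any average price b̄'_j > b̄_j (which can only move j earlier in the order), because moving j earlier only weakly increases the remaining capacity available when j is processed. -/

import Mathlib

/- Each greedy step can only use up capacity, so the remaining capacity after a prefix of the
bidders shrinks as the prefix grows. A bidder moved to an earlier position therefore faces at
least as much remaining capacity of every type, and a demand that fitted before still fits. -/

def greedyStep (m : ℕ) (r d : Fin m → ℕ) : Fin m → ℕ :=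
  if ∀ i, d i ≤ r i then r - d else r

lemma greedyStep_le (m : ℕ) (r d : Fin m → ℕ) : greedyStep m r d ≤ r := by
  unfold greedyStep
  split_ifs
  · exact tsub_le_self
  · exact le_rfl

lemma foldl_greedyStep_le (m : ℕ) (l : List (Fin m → ℕ)) (r : Fin m → ℕ) :
    l.foldl (greedyStep m) r ≤ r := by
  induction l generalizing r with
  | nil => exact le_rfl
  | cons d l ih => exact (ih _).trans (greedyStep_le m r d)

lemma antitone_foldl_greedyStep_take (m : ℕ) (l : List (Fin m → ℕ)) (r : Fin m → ℕ) :
    Antitone fun n => (l.take n).foldl (greedyStep m) r := by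
  refine antitone_nat_of_succ_le fun n => ?_
  simp only [List.take_add_one, List.foldl_append]
  exact foldl_greedyStep_le m _ _

/- `L` lists the other bidders in processing order and bidder `j`, with demand `d`, is inserted
at position `p`; raising `j`'s average price moves it to a position `p' ≤ p`. -/
/-- Monotonicity of greedy allocation in a bidder's own sort key: bidder j's win
at insertion position p depends only on the remaining capacity after processing
the prefix of the other bidders before it; moving j to an earlier position
p' ≤ p (a higher average price) only weakly increases the remaining capacity, so
if j's demand fits at position p it also fits at position p'. -/
theorem greedy_monotone (m : ℕ) (cap : Fin m → ℕ) (L : List (Fin m → ℕ))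
    (d : Fin m → ℕ) (p p' : ℕ) (hpp : p' ≤ p)
    (hwin : ∀ i, d i ≤ ((L.take p).foldl (greedyStep m) cap) i) :
    ∀ i, d i ≤ ((L.take p').foldl (greedyStep m) cap) i :=
  fun i => (hwin i).trans (antitone_foldl_greedyStep_take m L cap hpp i)
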